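/- Let C be a d-dimensional copula and C_T the copula of its order transform. Then Kendall's distribution function of C_T is pointwise at most Kendall's distribution function of C, i.e., K_{C_T}(t) ≤ K_C(t) for all t ∈ [0,1], where K_C(t) := Q^C[{u ∈ [0,1]^d : C(u) ≤ t}]. -/

import Mathlib

/-!
Let `ρ` be the law of the sorted vector `T u` under `Q^C` and `G` the vector of marginal
distribution functions of `ρ`. Every order statistic is one of the coordinates, so the marginals
of `ρ` inherit the null sets of the uniform law: they are atomless and live on `[0,1]`. Hence
`G` is continuous and Sklar's identity `H_ρ = C_T ∘ G` forces `Q^{C_T} = G_* ρ` (probability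
integral transform). Therefore `K_{C_T}(t) = Q^C {u | H_ρ (T u) ≤ t}`, and since `w ≤ u`
implies `T w ≤ T u`, we get `C u ≤ Q^C {w | T w ≤ T u} = H_ρ (T u)`, so this set lies in
`{C ≤ t}`.
-/

open MeasureTheory

/-- A copula measure: a probability measure on `[0,1]^d` (viewed inside
`Fin d → ℝ`) all of whose univariate marginals are uniform on `[0,1]`. -/
def IsCopulaMeasure {d : ℕ} (μ : Measure (Fin d → ℝ)) : Prop :=
  IsProbabilityMeasure μ ∧
    ∀ i : Fin d, μ.map (fun x => x i) = volume.restrict (Set.Icc 0 1)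

/-- The copula (distribution function) associated with a copula measure. -/
noncomputable def copulaFn {d : ℕ} (μ : Measure (Fin d → ℝ)) (u : Fin d → ℝ) : ℝ :=
  (μ {x | ∀ i, x i ≤ u i}).toReal

/-- The sorting (order statistic) map: `sortVec x` is the nondecreasing
rearrangement of the vector `x`. -/
noncomputable def sortVec {d : ℕ} (x : Fin d → ℝ) : Fin d → ℝ :=
  x ∘ Tuple.sort x

/-- The `i`-th univariate marginal distribution function of a measure on
`Fin d → ℝ`. -/
noncomputable def margCDF {d : ℕ} (ρ : Measure (Fin d → ℝ)) (i : Fin d) (t : ℝ) : ℝ :=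
  (ρ.map (fun x => x i) (Set.Iic t)).toReal

/-- `ν` is the copula measure of the order transform `C_T` of the copula
with copula measure `μ`: Sklar's identity `H^C_T = C_T ∘ (marginals of H^C_T)`
holds, where `H^C_T` is the distribution function of the image of `μ` under
the sorting map. -/
def IsOrderTransform {d : ℕ} (μ ν : Measure (Fin d → ℝ)) : Prop :=
  IsCopulaMeasure ν ∧
    ∀ x : Fin d → ℝ,
      ((μ.map sortVec) {y | ∀ i, y i ≤ x i}).toReal
        = copulaFn ν (fun i => margCDF (μ.map sortVec) i (x i))


open Set
open scoped Finset

section Sorting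

variable {d : ℕ}

lemma sortVec_le_iff (x : Fin d → ℝ) (i : Fin d) (a : ℝ) :
    sortVec x i ≤ a ↔ i < #{j | x j ≤ a} := by
  classical
  rw [sortVec, ← Tuple.lt_card_le_iff_apply_le_of_monotone (Tuple.monotone_sort x),
    Finset.card_equiv (Tuple.sort x) (t := {j | x j ≤ a}) (by simp)]

lemma monotone_sortVec : Monotone (sortVec (d := d)) := by
  intro x y hxy i
  rw [sortVec_le_iff]
  refine ((sortVec_le_iff y i _).1 le_rfl).trans_le (Finset.card_le_card fun j hj => ?_)
  simp only [Finset.mem_filter, Finset.mem_univ, true_and] at hj ⊢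
  exact (hxy j).trans hj

lemma measurable_sortVec : Measurable (sortVec (d := d)) := by
  classical
  refine measurable_pi_lambda _ fun i => measurable_of_Iic fun a => ?_
  have hpre : (fun x => sortVec x i) ⁻¹' Iic a =
      (fun x : Fin d → ℝ => #{j | x j ≤ a}) ⁻¹' {n | i < n} :=
    ext fun x => sortVec_le_iff x i a
  rw [hpre]
  refine measurableSet_preimage ?_ trivial
  simp only [Finset.card_filter]
  exact Finset.measurable_sum _ fun j _ => Measurable.ite
    (measurableSet_le (measurable_pi_apply j) measurable_const) measurable_const measurable_const

lemma map_sortVec_map_eval_null {μ : Measure (Fin d → ℝ)} {s : Set ℝ}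
    (hs : MeasurableSet s) (h : ∀ j, μ.map (fun x => x j) s = 0) (i : Fin d) :
    (μ.map sortVec).map (fun y => y i) s = 0 := by
  rw [Measure.map_map (measurable_pi_apply i) measurable_sortVec,
    Measure.map_apply ((measurable_pi_apply i).comp measurable_sortVec) hs]
  refine measure_mono_null (t := ⋃ j, (fun x => x j) ⁻¹' s)
    (fun x hx => mem_iUnion.2 ⟨Tuple.sort x i, hx⟩) (measure_iUnion_null fun j => ?_)
  rw [← Measure.map_apply (measurable_pi_apply j) hs]
  exact h j

end Sorting

lemma Monotone.exists_eq_and_le_iff {F : ℝ → ℝ} (hF : Monotone F) (hc : Continuous F)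
    (h0 : F 0 = 0) (h1 : F 1 = 1) {u : ℝ} (hu : u ∈ Icc 0 1) :
    ∃ s, F s = u ∧ ∀ a ≤ 1, F a ≤ u ↔ a ≤ s := by
  obtain ⟨c, hc01, hcu⟩ : u ∈ F '' Icc 0 1 :=
    intermediate_value_Icc zero_le_one hc.continuousOn (by rwa [h0, h1])
  set T := Icc 0 1 ∩ F ⁻¹' Iic u
  have hT : IsCompact T := isCompact_Icc.inter_right (isClosed_Iic.preimage hc)
  have hcT : c ∈ T := ⟨hc01, hcu.le⟩
  have hsT := hT.sSup_mem ⟨c, hcT⟩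
  have hcs : c ≤ sSup T := le_csSup hT.bddAbove hcT
  refine ⟨sSup T, le_antisymm hsT.2 (hcu ▸ hF hcs),
    fun a ha1 => ⟨fun ha => ?_, fun ha => ?_⟩⟩
  · rcases lt_or_ge a 0 with ha0 | ha0
    · exact ha0.le.trans (hc01.1.trans hcs)
    · exact le_csSup hT.bddAbove ⟨⟨ha0, ha1⟩, ha⟩
  · exact (hF ha).trans hsT.2

section CDF

open ProbabilityTheory

variable (m : Measure ℝ) [IsProbabilityMeasure m]

lemma continuous_cdf [NullSingletonClass m] : Continuous (cdf m) := by
  refine continuous_iff_continuousAt.2 fun a => ?_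
  rw [(cdf m).mono.continuousAt_iff_leftLim_eq_rightLim, StieltjesFunction.rightLim_eq]
  have h := (cdf m).measure_singleton a
  rw [measure_cdf, measure_singleton, eq_comm, ENNReal.ofReal_eq_zero, sub_nonpos] at h
  exact le_antisymm ((cdf m).mono.leftLim_le le_rfl) h

lemma cdf_zero_of_ae_mem_Icc [NullSingletonClass m] (h : ∀ᵐ a ∂m, a ∈ Icc (0 : ℝ) 1) :
    cdf m 0 = 0 := by
  have hnull : m (Iic 0) = 0 := by
    refine measure_mono_null (t := {0} ∪ {a | a ∉ Icc (0 : ℝ) 1}) (fun a ha => ?_)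
      (measure_union_null (measure_singleton 0) (ae_iff.1 h))
    rcases (mem_Iic.1 ha).lt_or_eq with ha0 | rfl
    · exact Or.inr fun h01 => (h01.1.trans_lt ha0).false
    · exact Or.inl rfl
  rw [cdf_eq_real, measureReal_def, hnull, ENNReal.toReal_zero]

lemma cdf_one_of_ae_mem_Icc (h : ∀ᵐ a ∂m, a ∈ Icc (0 : ℝ) 1) : cdf m 1 = 1 := by
  have h1 : m (Iic 1) = 1 :=
    (prob_compl_eq_zero_iff measurableSet_Iic).1 (ae_iff.1 (h.mono fun _ ha => ha.2))
  rw [cdf_eq_real, measureReal_def, h1, ENNReal.toReal_one]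

end CDF

section PiIic

variable {ι : Type*}

lemma isPiSystem_range_Iic_pi : IsPiSystem (range (Iic : (ι → ℝ) → Set (ι → ℝ))) := by
  rintro _ ⟨a, rfl⟩ _ ⟨b, rfl⟩ -
  exact ⟨a ⊓ b, Iic_inter_Iic.symm⟩

variable [Finite ι]

lemma measurableSpace_pi_eq_generateFrom_range_Iic :
    (inferInstance : MeasurableSpace (ι → ℝ)) = MeasurableSpace.generateFrom (range Iic) := by
  have hspan : IsCountablySpanning (range (Iic : ℝ → Set ℝ)) :=
    ⟨fun n : ℕ => Iic n, fun n => mem_range_self _,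
      iUnion_eq_univ_iff.2 fun x => (exists_nat_ge x).imp fun _ hn => hn⟩
  have hboxes : pi univ '' pi univ (fun _ : ι => range (Iic : ℝ → Set ℝ)) = range Iic := by
    ext s
    constructor
    · rintro ⟨f, hf, rfl⟩
      choose a ha using fun i => hf i (mem_univ i)
      exact ⟨a, by rw [← pi_univ_Iic]; simp only [ha]⟩
    · rintro ⟨a, rfl⟩
      exact ⟨fun i => Iic (a i), fun i _ => mem_range_self _, pi_univ_Iic a⟩
  rw [← hboxes, ← generateFrom_pi_eq fun _ => hspan, ← borel_eq_generateFrom_Iic,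
    ← BorelSpace.measurable_eq]

lemma Measure.ext_of_Iic_pi {μ ν : Measure (ι → ℝ)} [IsFiniteMeasure μ]
    (h : ∀ u, μ (Iic u) = ν (Iic u)) : μ = ν := by
  refine Measure.ext_of_generateFrom_of_iUnion _ (fun n : ℕ => Iic fun _ => (n : ℝ))
    measurableSpace_pi_eq_generateFrom_range_Iic isPiSystem_range_Iic_pi ?_
    (fun _ => mem_range_self _) (fun _ => measure_ne_top _ _) (by rintro _ ⟨u, rfl⟩; exact h u)
  refine iUnion_eq_univ_iff.2 fun x => ?_
  obtain ⟨M, hM⟩ := Finite.bddAbove_range x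
  obtain ⟨n, hn⟩ := exists_nat_ge M
  exact ⟨n, fun i => (hM (mem_range_self i)).trans hn⟩

end PiIic

namespace IsCopulaMeasure

variable {d : ℕ} {μ : Measure (Fin d → ℝ)}

lemma ae_mem_Icc (hμ : IsCopulaMeasure μ) (i : Fin d) : ∀ᵐ x ∂μ, x i ∈ Icc (0 : ℝ) 1 :=
  ae_of_ae_map (measurable_pi_apply i).aemeasurable
    (hμ.2 i ▸ ae_restrict_mem measurableSet_Icc)

lemma measure_Iic_eq_zero (hμ : IsCopulaMeasure μ) {u : Fin d → ℝ} {i : Fin d}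
    (hu : u i < 0) : μ (Iic u) = 0 :=
  measure_mono_null (t := {x | x i ∉ Icc 0 1})
    (fun x hx h01 => (h01.1.trans_lt ((hx : x ≤ u) i |>.trans_lt hu)).false)
    (ae_iff.1 (hμ.ae_mem_Icc i))

lemma nullSingletonClass_map_sortVec_map_eval (hμ : IsCopulaMeasure μ) (i : Fin d) :
    NullSingletonClass ((μ.map sortVec).map fun y => y i) :=
  ⟨fun c => map_sortVec_map_eval_null (measurableSet_singleton c)
    (fun j => by rw [hμ.2 j]; exact measure_singleton c) i⟩

lemma ae_map_sortVec_map_eval_mem_Icc (hμ : IsCopulaMeasure μ) (i : Fin d) :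
    ∀ᵐ a ∂(μ.map sortVec).map (fun y => y i), a ∈ Icc (0 : ℝ) 1 :=
  ae_iff.2 <| map_sortVec_map_eval_null measurableSet_Icc.compl (fun j => by
    rw [hμ.2 j, Measure.restrict_apply measurableSet_Icc.compl, compl_inter_self,
      measure_empty]) i

end IsCopulaMeasure

section CopulaFn

variable {d : ℕ} (ν : Measure (Fin d → ℝ))

lemma ofReal_copulaFn [IsFiniteMeasure ν] (u : Fin d → ℝ) :
    ENNReal.ofReal (copulaFn ν u) = ν (Iic u) :=
  ENNReal.ofReal_toReal (measure_ne_top _ _)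

lemma measurable_copulaFn [SFinite ν] : Measurable (copulaFn ν) :=
  ENNReal.measurable_toReal.comp <| measurable_measure_prodMk_left (ν := ν)
    (measurableSet_le measurable_snd measurable_fst)

lemma copulaFn_le_copulaFn_map_sortVec [IsFiniteMeasure ν] (v : Fin d → ℝ) :
    copulaFn ν v ≤ copulaFn (ν.map sortVec) (sortVec v) := by
  refine ENNReal.toReal_mono (measure_ne_top _ _) ?_
  change ν (Iic v) ≤ ν.map sortVec (Iic (sortVec v))
  rw [Measure.map_apply measurable_sortVec measurableSet_Iic]
  exact measure_mono fun w hw => monotone_sortVec hw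

end CopulaFn

section ProbIntegralTransform

open ProbabilityTheory

variable {d : ℕ} {ρ ν : Measure (Fin d → ℝ)}

noncomputable def probIntegralTransform (ρ : Measure (Fin d → ℝ)) (x : Fin d → ℝ) :
    Fin d → ℝ :=
  fun i => margCDF ρ i (x i)

variable [IsProbabilityMeasure ρ]

lemma margCDF_eq_cdf (i : Fin d) : margCDF ρ i = cdf (ρ.map fun x => x i) := by
  have := Measure.isProbabilityMeasure_map (μ := ρ) (measurable_pi_apply i).aemeasurable
  funext t
  rw [cdf_eq_real]
  rfl

lemma measurable_probIntegralTransform : Measurable (probIntegralTransform ρ) :=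
  measurable_pi_lambda _ fun i => by
    simp only [probIntegralTransform, margCDF_eq_cdf]
    exact (cdf _).mono.measurable.comp (measurable_pi_apply i)

lemma map_probIntegralTransform_Iic (hν : IsCopulaMeasure ν)
    (hatom : ∀ i, NullSingletonClass (ρ.map fun y => y i))
    (hsupp : ∀ i, ∀ᵐ a ∂ρ.map (fun y => y i), a ∈ Icc (0 : ℝ) 1)
    (hsk : ∀ x, copulaFn ρ x = copulaFn ν (probIntegralTransform ρ x)) (u : Fin d → ℝ) :
    ρ.map (probIntegralTransform ρ) (Iic u) = ν (Iic u) := by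
  have := fun i => Measure.isProbabilityMeasure_map (μ := ρ) (measurable_pi_apply i).aemeasurable
  have := hν.1
  have hG : ∀ y i, probIntegralTransform ρ y i = cdf (ρ.map fun x => x i) (y i) := fun y i => by
    rw [probIntegralTransform, margCDF_eq_cdf]
  rw [Measure.map_apply measurable_probIntegralTransform measurableSet_Iic]
  by_cases hneg : ∃ i, u i < 0
  · obtain ⟨i, hi⟩ := hneg
    rw [hν.measure_Iic_eq_zero hi]
    refine measure_mono_null (t := ∅) (fun y hy => ?_) measure_empty
    have hyi := (hy : probIntegralTransform ρ y ≤ u) i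
    rw [hG] at hyi
    exact ((cdf_nonneg _ _).trans_lt (hyi.trans_lt hi)).false
  push Not at hneg
  -- the transform is `≤ 1` and `ρ`, `ν` live below `1`, so `u` may be clamped to `u ⊓ 1`.
  set u' := u ⊓ 1
  have hu' : ∀ i, u' i ∈ Icc 0 1 := fun i => ⟨le_inf (hneg i) zero_le_one, inf_le_right⟩
  choose s hsu hs using fun i => (cdf (ρ.map fun x => x i)).mono.exists_eq_and_le_iff
    (continuous_cdf _) (cdf_zero_of_ae_mem_Icc _ (hsupp i)) (cdf_one_of_ae_mem_Icc _ (hsupp i))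
    (hu' i)
  have hGs : probIntegralTransform ρ s = u' := funext fun i => (hG s i).trans (hsu i)
  have hρ1 : ∀ᵐ y ∂ρ, ∀ i, y i ≤ 1 := ae_all_iff.2 fun i =>
    (ae_of_ae_map (measurable_pi_apply i).aemeasurable (hsupp i)).mono fun _ h => h.2
  have hν1 : ∀ᵐ x ∂ν, ∀ i, x i ≤ 1 := ae_all_iff.2 fun i =>
    (hν.ae_mem_Icc i).mono fun _ h => h.2
  calc ρ (probIntegralTransform ρ ⁻¹' Iic u) = ρ (Iic s) := by
        refine measure_congr (Filter.eventuallyEq_set.2 (hρ1.mono fun y hy => ?_))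
        refine forall_congr' fun i => ?_
        rw [hG, ← hs i (y i) (hy i)]
        exact ⟨fun h => le_inf h (cdf_le_one _ _), fun h => h.trans inf_le_left⟩
    _ = ENNReal.ofReal (copulaFn ν u') := by rw [← ofReal_copulaFn, hsk, hGs]
    _ = ν (Iic u) := by
        rw [ofReal_copulaFn]
        refine measure_congr (Filter.eventuallyEq_set.2 (hν1.mono fun x hx => ?_))
        exact ⟨fun h => mem_Iic.2 (h.trans inf_le_left), fun h => mem_Iic.2 (le_inf h hx)⟩

theorem map_probIntegralTransform_eq (hν : IsCopulaMeasure ν)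
    (hatom : ∀ i, NullSingletonClass (ρ.map fun y => y i))
    (hsupp : ∀ i, ∀ᵐ a ∂ρ.map (fun y => y i), a ∈ Icc (0 : ℝ) 1)
    (hsk : ∀ x, copulaFn ρ x = copulaFn ν (probIntegralTransform ρ x)) :
    ρ.map (probIntegralTransform ρ) = ν :=
  have := Measure.isProbabilityMeasure_map (μ := ρ)
    (measurable_probIntegralTransform (ρ := ρ)).aemeasurable
  Measure.ext_of_Iic_pi (map_probIntegralTransform_Iic hν hatom hsupp hsk)

end ProbIntegralTransform

theorem stmt12_general (d : ℕ) (μ ν : Measure (Fin d → ℝ))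
    (hμ : IsCopulaMeasure μ) (hν : IsOrderTransform μ ν)
    (t : ℝ) :
    ν {u | copulaFn ν u ≤ t} ≤ μ {u | copulaFn μ u ≤ t} := by
  have := hμ.1
  have := hν.1.1
  set ρ := μ.map sortVec
  have : IsProbabilityMeasure ρ := Measure.isProbabilityMeasure_map measurable_sortVec.aemeasurable
  have hsk : ∀ x, copulaFn ρ x = copulaFn ν (probIntegralTransform ρ x) := hν.2
  have hρν : ρ.map (probIntegralTransform ρ) = ν := map_probIntegralTransform_eq hν.1
    hμ.nullSingletonClass_map_sortVec_map_eval hμ.ae_map_sortVec_map_eval_mem_Icc hsk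
  have hmeas : MeasurableSet {u | copulaFn ν u ≤ t} :=
    measurableSet_le (measurable_copulaFn ν) measurable_const
  calc ν {u | copulaFn ν u ≤ t} = μ {v | copulaFn ρ (sortVec v) ≤ t} := by
        nth_rw 1 [← hρν]
        rw [Measure.map_apply measurable_probIntegralTransform hmeas,
          Measure.map_apply measurable_sortVec (measurable_probIntegralTransform hmeas)]
        congr 1
        ext v
        simp only [mem_preimage, mem_ofPred_eq, hsk]
    _ ≤ μ {u | copulaFn μ u ≤ t} :=
        measure_mono fun v hv => (copulaFn_le_copulaFn_map_sortVec μ v).trans hv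

theorem stmt12 (d : ℕ) (hd : 2 ≤ d) (μ ν : Measure (Fin d → ℝ))
    (hμ : IsCopulaMeasure μ) (hν : IsOrderTransform μ ν)
    (t : ℝ) (ht : t ∈ Set.Icc (0 : ℝ) 1) :
    ν {u | copulaFn ν u ≤ t} ≤ μ {u | copulaFn μ u ≤ t} :=
  stmt12_general d μ ν hμ hν t
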